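/- For every R ⊆ C: R is an (α,β) lower distribution reduct if and only if (I) η_R = η_C, and (II) η_{R∖{a}} ≠ η_C for every a ∈ R. -/
import Mathlib


/-- The indiscernibility class `[x]_R` of `x` for the attribute subset `R`:
all objects agreeing with `x` on every attribute in `R`. -/
def cls {U V A : Type*} (f : A → U → V) (R : Finset A) (x : U) : Set U :=
  {y | ∀ a ∈ R, f a x = f a y}

/-- Classical lower approximation of `X` with respect to `IND(R)`. -/
def lowerA {U V A : Type*} (f : A → U → V) (R : Finset A) (X : Set U) : Set U :=
  {x | cls f R x ⊆ X}

/-- Classical upper approximation of `X` with respect to `IND(R)`. -/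
def upperA {U V A : Type*} (f : A → U → V) (R : Finset A) (X : Set U) : Set U :=
  {x | (cls f R x ∩ X).Nonempty}

/-- α-probabilistic lower approximation: `{x | |[x]_R ∩ X| ≥ α·|[x]_R|}`. -/
noncomputable def aprLow {U V A : Type*} (f : A → U → V) (R : Finset A) (α : ℝ)
    (X : Set U) : Set U :=
  {x | α * ((cls f R x).ncard : ℝ) ≤ (((cls f R x) ∩ X).ncard : ℝ)}

/-- β-probabilistic upper approximation: `{x | |[x]_R ∩ X| > β·|[x]_R|}`. -/
noncomputable def aprUp {U V A : Type*} (f : A → U → V) (R : Finset A) (β : ℝ)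
    (X : Set U) : Set U :=
  {x | β * ((cls f R x).ncard : ℝ) < (((cls f R x) ∩ X).ncard : ℝ)}

/-- `η_R = (Σ_{i=1}^M |lower_R(apr_C^α(Y_i))|)/(|U|·M)`, the sum running over the
decision classes `Y_i = d⁻¹(v)`, `v ∈ d(U)`. -/
noncomputable def eta {U V A : Type*} [Fintype U] [DecidableEq V] (f : A → U → V)
    (C : Finset A) (d : U → V) (α : ℝ) (R : Finset A) : ℝ :=
  (∑ v ∈ Finset.univ.image d,
      ((lowerA f R (aprLow f C α (d ⁻¹' {v}))).ncard : ℝ)) /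
    ((Fintype.card U : ℝ) * ((Finset.univ.image d).card : ℝ))

/-- `μ_R = (Σ_{i=1}^M |upper_R(Apr_C^β(Y_i))|)/(|U|·M)`, the sum running over the
decision classes `Y_i = d⁻¹(v)`, `v ∈ d(U)`. -/
noncomputable def mu {U V A : Type*} [Fintype U] [DecidableEq V] (f : A → U → V)
    (C : Finset A) (d : U → V) (β : ℝ) (R : Finset A) : ℝ :=
  (∑ v ∈ Finset.univ.image d,
      ((upperA f R (aprUp f C β (d ⁻¹' {v}))).ncard : ℝ)) /
    ((Fintype.card U : ℝ) * ((Finset.univ.image d).card : ℝ))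

/-- `R` is an (α,β) lower distribution consistent set:
`apr_R^α(Y_i) = apr_C^α(Y_i)` for every decision class `Y_i`. -/
def LowerConsistent {U V A : Type*} [Fintype U] [DecidableEq V] (f : A → U → V)
    (C : Finset A) (d : U → V) (α : ℝ) (R : Finset A) : Prop :=
  ∀ v ∈ Finset.univ.image d, aprLow f R α (d ⁻¹' {v}) = aprLow f C α (d ⁻¹' {v})

/-- `R` is an (α,β) upper distribution consistent set:
`Apr_R^β(Y_i) = Apr_C^β(Y_i)` for every decision class `Y_i`. -/
def UpperConsistent {U V A : Type*} [Fintype U] [DecidableEq V] (f : A → U → V)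
    (C : Finset A) (d : U → V) (β : ℝ) (R : Finset A) : Prop :=
  ∀ v ∈ Finset.univ.image d, aprUp f R β (d ⁻¹' {v}) = aprUp f C β (d ⁻¹' {v})

/-- `R` is an (α,β) lower distribution reduct: a lower distribution consistent set
no proper subset of which is lower distribution consistent. -/
def LowerReduct {U V A : Type*} [Fintype U] [DecidableEq V] (f : A → U → V)
    (C : Finset A) (d : U → V) (α : ℝ) (R : Finset A) : Prop :=
  LowerConsistent f C d α R ∧ ∀ R' ⊂ R, ¬ LowerConsistent f C d α R'

/-- `R` is an (α,β) upper distribution reduct: an upper distribution consistent set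
no proper subset of which is upper distribution consistent. -/
def UpperReduct {U V A : Type*} [Fintype U] [DecidableEq V] (f : A → U → V)
    (C : Finset A) (d : U → V) (β : ℝ) (R : Finset A) : Prop :=
  UpperConsistent f C d β R ∧ ∀ R' ⊂ R, ¬ UpperConsistent f C d β R'

section Aux
variable {U V A : Type*} [Fintype U] [DecidableEq V] {f : A → U → V}

lemma mem_cls_self (R : Finset A) (x : U) : x ∈ cls f R x := fun _ _ => rfl

lemma cls_symm {R : Finset A} {x y : U} (h : y ∈ cls f R x) : x ∈ cls f R y :=
  fun a ha => (h a ha).symm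

lemma cls_anti {R S : Finset A} (h : R ⊆ S) (x : U) : cls f S x ⊆ cls f R x :=
  fun _ hy a ha => hy a (h ha)

lemma cls_eq_of_mem {R : Finset A} {x y : U} (h : y ∈ cls f R x) :
    cls f R y = cls f R x := by
  ext z
  constructor
  · intro hz a ha; exact (h a ha).trans (hz a ha)
  · intro hz a ha; exact ((h a ha).symm).trans (hz a ha)

lemma aprLow_classInv {R : Finset A} {x y : U} (h : y ∈ cls f R x) {α : ℝ} {X : Set U} :
    y ∈ aprLow f R α X ↔ x ∈ aprLow f R α X := by
  unfold aprLow
  rw [Set.mem_setOf_eq, Set.mem_setOf_eq, cls_eq_of_mem h]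

lemma cls_subset_aprLow {R : Finset A} {x : U} {α : ℝ} {X : Set U}
    (h : x ∈ aprLow f R α X) : cls f R x ⊆ aprLow f R α X :=
  fun _ hy => (aprLow_classInv hy).2 h

lemma lowerA_subset (R : Finset A) (X : Set U) : lowerA f R X ⊆ X :=
  fun x hx => hx (mem_cls_self R x)

lemma lowerA_mono {R S : Finset A} (h : R ⊆ S) (X : Set U) :
    lowerA f R X ⊆ lowerA f S X :=
  fun _ hx => (cls_anti h _).trans hx

lemma lowerA_aprLow (R : Finset A) (α : ℝ) (X : Set U) :
    lowerA f R (aprLow f R α X) = aprLow f R α X :=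
  Set.Subset.antisymm (lowerA_subset _ _) (fun _ hx => cls_subset_aprLow hx)

lemma lowerA_eq_mono {R₁ R₂ : Finset A} (h : R₁ ⊆ R₂) {S : Set U}
    (hS : lowerA f R₁ S = S) : lowerA f R₂ S = S := by
  refine Set.Subset.antisymm (lowerA_subset _ _) fun x hx => ?_
  rw [← hS] at hx
  exact lowerA_mono h S hx

lemma ncard_eq_card (s : Set U) : s.ncard = (Set.toFinite s).toFinset.card :=
  Set.ncard_eq_toFinset_card _ _

lemma inter_toFinset (s X : Set U) [DecidablePred (· ∈ X)] :
    (Set.toFinite (s ∩ X)).toFinset = (Set.toFinite s).toFinset.filter (· ∈ X) := by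
  ext z; simp [Set.Finite.mem_toFinset]

lemma apr_eq_of_union {C R : Finset A} (hR : R ⊆ C) (α : ℝ) (X : Set U)
    (hU : ∀ y ∈ aprLow f C α X, cls f R y ⊆ aprLow f C α X) :
    aprLow f R α X = aprLow f C α X := by
  classical
  ext x
  set T : Finset U := (Set.toFinite (cls f R x)).toFinset with hTdef
  have hT : ∀ z, z ∈ T ↔ z ∈ cls f R x := fun z => Set.Finite.mem_toFinset _
  set g : U → (↥C → V) := fun y a => f a.1 y with hg
  set W := T.image g with hW
  have hfib : ∀ y ∈ T, T.filter (fun z => g z = g y)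
      = (Set.toFinite (cls f C y)).toFinset := by
    intro y hy
    ext z
    simp only [Finset.mem_filter, Set.Finite.mem_toFinset]
    constructor
    · rintro ⟨_, hz⟩ a ha
      exact (congrFun hz ⟨a, ha⟩).symm
    · intro hz
      refine ⟨?_, funext fun a => (hz a.1 a.2).symm⟩
      have h2 : z ∈ cls f R y := cls_anti hR y hz
      rw [cls_eq_of_mem ((hT y).1 hy)] at h2
      exact (hT z).2 h2
  have hc1 : T.card = ∑ w ∈ W, (T.filter (fun z => g z = w)).card :=
    Finset.card_eq_sum_card_fiberwise (fun z hz => Finset.mem_image_of_mem g hz)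
  have hc2 : (T.filter (· ∈ X)).card
      = ∑ w ∈ W, ((T.filter (fun z => g z = w)).filter (· ∈ X)).card := by
    rw [Finset.card_eq_sum_card_fiberwise (f := g) (t := W)
      (fun z hz => Finset.mem_image_of_mem g (Finset.mem_filter.1 hz).1)]
    refine Finset.sum_congr rfl fun w _ => ?_
    congr 1
    ext z
    simp only [Finset.mem_filter]
    tauto
  have hcR : ((cls f R x).ncard : ℝ) = (T.card : ℝ) := by rw [ncard_eq_card]
  have hcRX : (((cls f R x) ∩ X).ncard : ℝ) = ((T.filter (· ∈ X)).card : ℝ) := by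
    rw [ncard_eq_card, inter_toFinset]
  by_cases hx : x ∈ aprLow f C α X
  · refine iff_of_true ?_ hx
    have hxy : ∀ y ∈ T, y ∈ aprLow f C α X := fun y hy => hU x hx ((hT y).1 hy)
    have key : ∀ w ∈ W, α * ((T.filter (fun z => g z = w)).card : ℝ)
        ≤ (((T.filter (fun z => g z = w)).filter (· ∈ X)).card : ℝ) := by
      intro w hw
      obtain ⟨y, hy, rfl⟩ := Finset.mem_image.1 hw
      rw [hfib y hy, ← inter_toFinset, ← ncard_eq_card, ← ncard_eq_card]
      exact hxy y hy
    show α * ((cls f R x).ncard : ℝ) ≤ (((cls f R x) ∩ X).ncard : ℝ)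
    rw [hcR, hcRX, hc1, hc2]
    push_cast
    rw [Finset.mul_sum]
    exact Finset.sum_le_sum key
  · refine iff_of_false ?_ hx
    have hxy : ∀ y ∈ T, y ∉ aprLow f C α X := by
      intro y hy hy'
      exact hx (hU y hy' (cls_symm ((hT y).1 hy)))
    have key : ∀ w ∈ W, (((T.filter (fun z => g z = w)).filter (· ∈ X)).card : ℝ)
        < α * ((T.filter (fun z => g z = w)).card : ℝ) := by
      intro w hw
      obtain ⟨y, hy, rfl⟩ := Finset.mem_image.1 hw
      rw [hfib y hy, ← inter_toFinset, ← ncard_eq_card, ← ncard_eq_card]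
      exact not_le.1 (hxy y hy)
    have hne : W.Nonempty :=
      ⟨g x, Finset.mem_image_of_mem g ((hT x).2 (mem_cls_self R x))⟩
    have hlt : (((cls f R x) ∩ X).ncard : ℝ) < α * ((cls f R x).ncard : ℝ) := by
      rw [hcR, hcRX, hc1, hc2]
      push_cast
      rw [Finset.mul_sum]
      exact Finset.sum_lt_sum_of_nonempty hne key
    exact not_le.2 hlt

lemma eta_eq_iff [Nonempty U] (C : Finset A) (d : U → V) (α : ℝ) {R : Finset A}
    (hR : R ⊆ C) :
    eta f C d α R = eta f C d α C ↔
      ∀ v ∈ Finset.univ.image d,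
        lowerA f R (aprLow f C α (d ⁻¹' {v})) = aprLow f C α (d ⁻¹' {v}) := by
  classical
  have hM : (0:ℝ) < ((Finset.univ.image d).card : ℝ) := by
    exact_mod_cast Finset.card_pos.2 (Finset.univ_nonempty.image d)
  have hU0 : (0:ℝ) < (Fintype.card U : ℝ) := by exact_mod_cast Fintype.card_pos
  have hD : ((Fintype.card U : ℝ) * ((Finset.univ.image d).card : ℝ)) ≠ 0 := by positivity
  unfold eta
  rw [div_left_inj' hD]
  have hrw : ∀ v ∈ Finset.univ.image d,
      ((lowerA f C (aprLow f C α (d ⁻¹' {v}))).ncard : ℝ)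
        = ((aprLow f C α (d ⁻¹' {v})).ncard : ℝ) := fun v _ => by rw [lowerA_aprLow]
  rw [Finset.sum_congr rfl hrw]
  have hle : ∀ v ∈ Finset.univ.image d,
      ((lowerA f R (aprLow f C α (d ⁻¹' {v}))).ncard : ℝ)
        ≤ ((aprLow f C α (d ⁻¹' {v})).ncard : ℝ) := fun v _ => by
    exact_mod_cast Set.ncard_le_ncard (lowerA_subset _ _) (Set.toFinite _)
  rw [Finset.sum_eq_sum_iff_of_le hle]
  refine forall₂_congr fun v hv => ?_
  rw [Nat.cast_inj]
  constructor
  · intro h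
    exact Set.eq_of_subset_of_ncard_le (lowerA_subset _ _) h.ge (Set.toFinite _)
  · intro h; rw [h]

lemma lowerConsistent_iff (C : Finset A) (d : U → V) (α : ℝ) {R : Finset A}
    (hR : R ⊆ C) :
    LowerConsistent f C d α R ↔
      ∀ v ∈ Finset.univ.image d,
        lowerA f R (aprLow f C α (d ⁻¹' {v})) = aprLow f C α (d ⁻¹' {v}) := by
  constructor
  · intro h v hv
    refine Set.Subset.antisymm (lowerA_subset _ _) fun x hx => ?_
    rw [← h v hv] at hx
    show x ∈ lowerA f R (aprLow f C α (d ⁻¹' {v}))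
    rw [← h v hv]
    exact cls_subset_aprLow hx
  · intro h v hv
    refine apr_eq_of_union hR α _ fun y hy => ?_
    rw [← h v hv] at hy
    exact hy

end Aux

theorem lowerReduct_iff {U V A : Type*} [Fintype U] [Nonempty U]
    [DecidableEq V] [DecidableEq A] (f : A → U → V) (C : Finset A) (d : U → V)
    (α β : ℝ) (hβ0 : 0 ≤ β) (hβα : β < α) (hα1 : α ≤ 1)
    (R : Finset A) (hR : R ⊆ C) :
    LowerReduct f C d α R ↔
      (eta f C d α R = eta f C d α C ∧
        ∀ a ∈ R, eta f C d α (R.erase a) ≠ eta f C d α C) := by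
  constructor
  · rintro ⟨hcons, hmin⟩
    have hP := (lowerConsistent_iff C d α hR).1 hcons
    refine ⟨(eta_eq_iff C d α hR).2 hP, fun a ha h => ?_⟩
    have hE : R.erase a ⊆ C := (Finset.erase_subset a R).trans hR
    exact hmin _ (Finset.erase_ssubset ha)
      ((lowerConsistent_iff C d α hE).2 ((eta_eq_iff C d α hE).1 h))
  · rintro ⟨h1, h2⟩
    refine ⟨(lowerConsistent_iff C d α hR).2 ((eta_eq_iff C d α hR).1 h1),
      fun R' hR' hcons' => ?_⟩
    have hR'C : R' ⊆ C := hR'.subset.trans hR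
    have hP' := (lowerConsistent_iff C d α hR'C).1 hcons'
    obtain ⟨a, haR, haR'⟩ := Finset.exists_of_ssubset hR'
    have hsub : R' ⊆ R.erase a :=
      fun b hb => Finset.mem_erase.2 ⟨fun e => haR' (e ▸ hb), hR'.subset hb⟩
    have hE : R.erase a ⊆ C := (Finset.erase_subset a R).trans hR
    have hPe : ∀ v ∈ Finset.univ.image d,
        lowerA f (R.erase a) (aprLow f C α (d ⁻¹' {v})) = aprLow f C α (d ⁻¹' {v}) :=
      fun v hv => lowerA_eq_mono hsub (hP' v hv)
    exact h2 a haR ((eta_eq_iff C d α hE).2 hPe)
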